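/- Let A₂,…,A_M and B₂,…,B_M be events, let A = ∪_j A_j, B = ∪_j B_j, and let C be an event such that, conditioned on B occurring with exactly ℓ ≥ 1 of the events B_j holding, P(C | B, exactly ℓ hold) = 1/(ℓ+1). Then P(A ∪ (B ∩ Cᶜ)) ≤ ∑_{j=2}^M P(A_j) + (1/2) ∑_{j=2}^M P(B_j). -/
import Mathlib


/-- Probability of an event `A` in a finite probability space with weights `p`. -/
noncomputable def Pr {Ω : Type*} [Fintype Ω] (p : Ω → ℝ) (A : Set Ω) : ℝ :=
  ∑ ω, A.indicator p ω

section aux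

variable {Ω : Type*} [Fintype Ω] (p : Ω → ℝ)

lemma Pr_nonneg (hp : ∀ ω, 0 ≤ p ω) (S : Set Ω) : 0 ≤ Pr p S :=
  Finset.sum_nonneg fun ω _ => Set.indicator_nonneg (fun a _ => hp a) ω

lemma Pr_mono (hp : ∀ ω, 0 ≤ p ω) {S T : Set Ω} (h : S ⊆ T) : Pr p S ≤ Pr p T :=
  Finset.sum_le_sum fun ω _ => Set.indicator_le_indicator_of_subset h (fun a => hp a) ω

lemma Pr_union_le (hp : ∀ ω, 0 ≤ p ω) (S T : Set Ω) :
    Pr p (S ∪ T) ≤ Pr p S + Pr p T := by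
  unfold Pr
  rw [← Finset.sum_add_distrib]
  refine Finset.sum_le_sum fun ω _ => ?_
  by_cases hS : ω ∈ S
  · rw [Set.indicator_of_mem (Set.mem_union_left _ hS), Set.indicator_of_mem hS]
    exact le_add_of_nonneg_right (Set.indicator_nonneg (fun a _ => hp a) ω)
  by_cases hT : ω ∈ T
  · rw [Set.indicator_of_mem (Set.mem_union_right _ hT), Set.indicator_of_mem hT]
    exact le_add_of_nonneg_left (Set.indicator_nonneg (fun a _ => hp a) ω)
  · rw [Set.indicator_of_notMem (by simp [hS, hT]), Set.indicator_of_notMem hS,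
      Set.indicator_of_notMem hT]
    simp

lemma Pr_iUnion_le (hp : ∀ ω, 0 ≤ p ω) {ι : Type*} [Fintype ι] (A : ι → Set Ω) :
    Pr p (⋃ j, A j) ≤ ∑ j, Pr p (A j) := by
  unfold Pr
  rw [Finset.sum_comm]
  refine Finset.sum_le_sum fun ω _ => ?_
  by_cases h : ω ∈ ⋃ j, A j
  · obtain ⟨j, hj⟩ := Set.mem_iUnion.mp h
    rw [Set.indicator_of_mem h]
    calc p ω = (A j).indicator p ω := (Set.indicator_of_mem hj p).symm
      _ ≤ ∑ i, (A i).indicator p ω := Finset.single_le_sum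
          (fun i _ => Set.indicator_nonneg (fun a _ => hp a) ω) (Finset.mem_univ j)
  · rw [Set.indicator_of_notMem h]
    exact Finset.sum_nonneg fun i _ => Set.indicator_nonneg (fun a _ => hp a) ω

lemma Pr_add_compl_inter (C S : Set Ω) :
    Pr p (C ∩ S) + Pr p (Cᶜ ∩ S) = Pr p S := by
  rw [Pr, Pr, Pr, ← Finset.sum_add_distrib]
  refine Finset.sum_congr rfl fun ω _ => ?_
  by_cases hS : ω ∈ S
  · by_cases hC : ω ∈ C
    · rw [Set.indicator_of_mem (Set.mem_inter hC hS), Set.indicator_of_notMem (by simp [hC]),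
        Set.indicator_of_mem hS]; ring
    · rw [Set.indicator_of_notMem (by simp [hC]),
        Set.indicator_of_mem (show ω ∈ Cᶜ ∩ S from ⟨hC, hS⟩),
        Set.indicator_of_mem hS]; ring
  · rw [Set.indicator_of_notMem (by simp [hS]), Set.indicator_of_notMem (by simp [hS]),
      Set.indicator_of_notMem hS]; ring

end aux

/-- Union bound with fair tie-breaking.  Let `A_j`, `B_j` (`j` ranging over
the impostors) be events, `A = ⋃ A_j`, `B = ⋃ B_j`, and let `C` be such that conditioned
on exactly `ℓ ≥ 1` of the `B_j` holding, `P(C | ·) = 1/(ℓ+1)`.  Then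
`P(A ∪ (B ∩ Cᶜ)) ≤ ∑ P(A_j) + (1/2) ∑ P(B_j)`. -/
theorem stmt7 {Ω : Type*} [Fintype Ω] (p : Ω → ℝ)
    (hp : ∀ ω, 0 ≤ p ω) (hsum : ∑ ω, p ω = 1)
    {ι : Type*} [Fintype ι] (A B : ι → Set Ω) (C : Set Ω)
    (L : Ω → ℕ) (hL : ∀ ω, L ω = Nat.card {j // ω ∈ B j})
    (hC : ∀ ℓ : ℕ, 1 ≤ ℓ →
      Pr p (C ∩ {ω | L ω = ℓ}) = (1 / ((ℓ : ℝ) + 1)) * Pr p {ω | L ω = ℓ}) :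
    Pr p ((⋃ j, A j) ∪ ((⋃ j, B j) ∩ Cᶜ)) ≤
      (∑ j, Pr p (A j)) + (1 / 2) * ∑ j, Pr p (B j) := by
  classical
  set N := Fintype.card ι with hN
  -- basic facts about L
  have hLcard : ∀ ω, L ω = (Finset.univ.filter (fun j => ω ∈ B j)).card := by
    intro ω
    rw [hL, Nat.card_eq_fintype_card, Fintype.card_subtype]
  have hLle : ∀ ω, L ω ≤ N := by
    intro ω
    rw [hLcard]
    exact (Finset.card_filter_le _ _).trans_eq rfl
  have hmemB : ∀ ω, ω ∈ (⋃ j, B j) ↔ 1 ≤ L ω := by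
    intro ω
    rw [hLcard]
    simp only [Set.mem_iUnion, Nat.one_le_iff_ne_zero, Ne, Finset.card_eq_zero,
      Finset.filter_eq_empty_iff]
    push_neg
    simp
  -- step 1: union bound over A and the B∩Cᶜ part
  have step1 : Pr p ((⋃ j, A j) ∪ ((⋃ j, B j) ∩ Cᶜ)) ≤
      (∑ j, Pr p (A j)) + Pr p ((⋃ j, B j) ∩ Cᶜ) :=
    (Pr_union_le p hp _ _).trans (by gcongr; exact Pr_iUnion_le p hp A)
  -- step 2: decompose B∩Cᶜ over values of L
  have hdecomp : Pr p ((⋃ j, B j) ∩ Cᶜ) =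
      ∑ ℓ ∈ Finset.range (N + 1), Pr p ((⋃ j, B j) ∩ Cᶜ ∩ {ω | L ω = ℓ}) := by
    unfold Pr
    rw [Finset.sum_comm]
    refine Finset.sum_congr rfl fun ω _ => ?_
    rw [Finset.sum_eq_single (L ω)]
    · by_cases h : ω ∈ (⋃ j, B j) ∩ Cᶜ
      · rw [Set.indicator_of_mem h,
          Set.indicator_of_mem (show ω ∈ (⋃ j, B j) ∩ Cᶜ ∩ {ω' | L ω' = L ω} from ⟨h, rfl⟩)]
      · rw [Set.indicator_of_notMem h, Set.indicator_of_notMem (fun hh => h hh.1)]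
    · intro b _ hb
      exact Set.indicator_of_notMem (fun hh => hb (hh.2.symm)) p
    · intro h
      exact absurd (Finset.mem_range.mpr (Nat.lt_succ_of_le (hLle ω))) h
  -- for ℓ ≥ 1, (⋃ B) ∩ Cᶜ ∩ {L = ℓ} = Cᶜ ∩ {L = ℓ}
  have hset : ∀ ℓ : ℕ, 1 ≤ ℓ →
      (⋃ j, B j) ∩ Cᶜ ∩ {ω | L ω = ℓ} = Cᶜ ∩ {ω | L ω = ℓ} := by
    intro ℓ hℓ
    ext ω
    simp only [Set.mem_inter_iff, Set.mem_setOf_eq, hmemB, and_assoc]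
    constructor
    · rintro ⟨_, h2, h3⟩; exact ⟨h2, h3⟩
    · rintro ⟨h2, h3⟩; exact ⟨h3 ▸ hℓ, h2, h3⟩
  -- the ℓ = 0 term vanishes
  have hzero : Pr p ((⋃ j, B j) ∩ Cᶜ ∩ {ω | L ω = 0}) = 0 := by
    have : (⋃ j, B j) ∩ Cᶜ ∩ {ω | L ω = 0} = ∅ := by
      ext ω
      simp only [Set.mem_inter_iff, Set.mem_setOf_eq, hmemB, Set.mem_empty_iff_false,
        iff_false]
      rintro ⟨⟨h1, _⟩, h0⟩
      omega
    rw [this]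
    simp [Pr]
  -- step 3: each ℓ ≥ 1 term is ≤ (ℓ/2) * Pr{L = ℓ}
  have hterm : ∀ ℓ : ℕ, 1 ≤ ℓ →
      Pr p ((⋃ j, B j) ∩ Cᶜ ∩ {ω | L ω = ℓ}) ≤ (ℓ : ℝ) / 2 * Pr p {ω | L ω = ℓ} := by
    intro ℓ hℓ
    rw [hset ℓ hℓ]
    have hadd := Pr_add_compl_inter p C {ω | L ω = ℓ}
    have hCℓ := hC ℓ hℓ
    have hPr0 : 0 ≤ Pr p {ω | L ω = ℓ} := Pr_nonneg p hp _
    have heq : Pr p (Cᶜ ∩ {ω | L ω = ℓ}) = (1 - 1 / ((ℓ:ℝ) + 1)) * Pr p {ω | L ω = ℓ} := by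
      rw [sub_mul, one_mul, ← hCℓ]
      linarith
    rw [heq]
    have hfrac : 1 - 1 / ((ℓ:ℝ) + 1) ≤ (ℓ : ℝ) / 2 := by
      have h1 : (1:ℝ) ≤ (ℓ:ℝ) := by exact_mod_cast hℓ
      have hℓpos : (0:ℝ) < (ℓ:ℝ) + 1 := by positivity
      have key : (1 / ((ℓ:ℝ) + 1)) * ((ℓ:ℝ) + 1) = 1 := by field_simp
      nlinarith [key, h1, hℓpos]
    exact mul_le_mul_of_nonneg_right hfrac hPr0
  -- step 4: ∑ ℓ * Pr{L = ℓ} = ∑_j Pr(B_j)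
  have hexp : ∑ ℓ ∈ Finset.range (N + 1), (ℓ : ℝ) * Pr p {ω | L ω = ℓ} =
      ∑ j, Pr p (B j) := by
    unfold Pr
    simp_rw [Finset.mul_sum]
    rw [Finset.sum_comm]
    conv_rhs => rw [Finset.sum_comm]
    refine Finset.sum_congr rfl fun ω _ => ?_
    have hleft : ∑ ℓ ∈ Finset.range (N + 1), (ℓ : ℝ) * {ω' | L ω' = ℓ}.indicator p ω
        = (L ω : ℝ) * p ω := by
      rw [Finset.sum_eq_single (L ω)]
      · rw [Set.indicator_of_mem (show ω ∈ {ω' | L ω' = L ω} from rfl)]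
      · intro b _ hb
        rw [Set.indicator_of_notMem (fun hh => hb hh.symm), mul_zero]
      · intro h
        exact absurd (Finset.mem_range.mpr (Nat.lt_succ_of_le (hLle ω))) h
    rw [hleft]
    have hright : ∑ j, (B j).indicator p ω
        = ((Finset.univ.filter (fun j => ω ∈ B j)).card : ℝ) * p ω := by
      rw [Finset.sum_indicator_eq_sum_filter]
      simp [Finset.sum_const, nsmul_eq_mul]
    rw [hright, hLcard]
  -- combine
  have step2 : Pr p ((⋃ j, B j) ∩ Cᶜ) ≤ (1 / 2) * ∑ j, Pr p (B j) := by
    rw [hdecomp, ← hexp, Finset.mul_sum]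
    refine Finset.sum_le_sum fun ℓ hℓ => ?_
    rcases Nat.eq_zero_or_pos ℓ with h0 | h1
    · subst h0
      rw [hzero]
      simp
    · calc Pr p ((⋃ j, B j) ∩ Cᶜ ∩ {ω | L ω = ℓ}) ≤ (ℓ : ℝ) / 2 * Pr p {ω | L ω = ℓ} :=
          hterm ℓ h1
        _ = 1 / 2 * ((ℓ : ℝ) * Pr p {ω | L ω = ℓ}) := by ring
  linarith
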